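/- Let g be entire and 0 < p ≤ ∞. A bounded Volterra operator V_g : F_α^p → F_α^∞ is compact if and only if g(z) = az + b is affine; equivalently, for entire g, |g'(z)|/(1+|z|) → 0 as |z| → ∞ iff g' is constant. -/

import Mathlib

/-!
Compactness is tested on the normalized reproducing kernels `k_c = W_{-c} 1`, where `W_w` is the
Weyl translation: they have constant norm and tend to `0` locally uniformly as `|c| → ∞`. Since
`(V_g f)' = f g'`, a Cauchy estimate on the circle of radius `1 / (1 + |c|)` about `c` gives
`|g'(c)| ≤ e^{3α/2} (1 + |c|) ‖V_g k_c‖_∞`, so compactness forces `g'(z) = o(|z|)`, and a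
Liouville argument makes `g'` constant.

Conversely, if `|g'| ≤ A` and `|f_j g'| ≤ K e^{α|w|²/2}`, a locally uniformly null sequence has
`‖V_g f_j‖_∞ → 0`: near the origin by uniform convergence, far out because
`∫_0^1 e^{αt|z|²/2} dt ≤ 2 e^{α|z|²/2} / (α|z|²)`. When `g' = a` the growth bound comes from the
boundedness of `V_g` itself: `(V_g (W_w f))'(0) = a e^{-α|w|²/2} f(w)`, estimated by Cauchy on the
unit circle.
-/

open MeasureTheory Complex Filter Topology ENNReal NNReal Bornology

/-- The `F_α^p` norm (finite `p`) as an extended real. -/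
noncomputable def fockNormP (α p : ℝ) (f : ℂ → ℂ) : ℝ≥0∞ :=
  (ENNReal.ofReal (α * p / (2 * Real.pi)) *
    ∫⁻ z : ℂ, ENNReal.ofReal
      (‖f z‖ ^ p * Real.exp (-(α * p / 2) * ‖z‖ ^ 2))) ^ (1 / p)

/-- The `F_α^∞` norm as an extended real. -/
noncomputable def fockNormInf (α : ℝ) (f : ℂ → ℂ) : ℝ≥0∞ :=
  ⨆ z : ℂ, ENNReal.ofReal (‖f z‖ * Real.exp (-(α / 2) * ‖z‖ ^ 2))

/-- The Volterra operator `V_g f(z) = ∫_0^z f(w) g'(w) dw`. -/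
noncomputable def volterra (g f : ℂ → ℂ) (z : ℂ) : ℂ :=
  z * ∫ t in (0:ℝ)..1, f ((t : ℂ) * z) * deriv g ((t : ℂ) * z)

/-- Sequential compactness of `V_g : F_α^p → F_α^∞` for a given source norm `N`. -/
def volterraCompact (α : ℝ) (g : ℂ → ℂ) (N : (ℂ → ℂ) → ℝ≥0∞) : Prop :=
  ∀ f : ℕ → ℂ → ℂ, (∀ j, Differentiable ℂ (f j)) →
    (∃ M : ℝ≥0∞, M < ⊤ ∧ ∀ j, N (f j) ≤ M) →
    (∀ K : Set ℂ, IsCompact K → TendstoUniformlyOn (fun j => f j) 0 Filter.atTop K) →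
    Filter.Tendsto (fun j => fockNormInf α (volterra g (f j))) Filter.atTop (nhds 0)

open Metric ComplexConjugate

theorem deriv_eq_zero_of_tendsto_norm_div_one_add_norm {F : ℂ → ℂ} (hF : Differentiable ℂ F)
    (h : Tendsto (fun z => ‖F z‖ / (1 + ‖z‖)) (cobounded ℂ) (𝓝 0)) (z : ℂ) : deriv F z = 0 := by
  refine norm_le_zero_iff.1 (le_of_forall_pos_le_add fun ε hε => ?_)
  obtain ⟨R, -, hR⟩ := hasBasis_cobounded_norm.eventually_iff.1
    (h.eventually (eventually_le_nhds (half_pos hε)))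
  set r := |R| + 1 + ‖z‖ with hr_def
  have hr : 1 + ‖z‖ ≤ r := by linarith [abs_nonneg R]
  have hsphere : ∀ w ∈ sphere z r, ‖F w‖ ≤ ε / 2 * (1 + ‖z‖ + r) := fun w hw => by
    have hwz : ‖w - z‖ = r := mem_sphere_iff_norm.1 hw
    have hw := hR (show R ≤ ‖w‖ by linarith [le_abs_self R, norm_sub_le w z])
    rw [div_le_iff₀ (by positivity)] at hw
    refine hw.trans ?_
    gcongr ε / 2 * ?_
    linarith [norm_le_insert' w z]
  have hc := norm_deriv_le_of_forall_mem_sphere_norm_le (by linarith [norm_nonneg z])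
    hF.diffContOnCl hsphere
  refine hc.trans ?_
  rw [div_le_iff₀ (by linarith [norm_nonneg z]), zero_add]
  nlinarith

theorem tendsto_norm_div_one_add_norm_iff_eq_const {F : ℂ → ℂ} (hF : Differentiable ℂ F) :
    Tendsto (fun z => ‖F z‖ / (1 + ‖z‖)) (cobounded ℂ) (𝓝 0) ↔ ∃ c, ∀ z, F z = c := by
  refine ⟨fun h => ⟨F 0, fun z => is_const_of_deriv_eq_zero hF
    (deriv_eq_zero_of_tendsto_norm_div_one_add_norm hF h) z 0⟩, fun ⟨c, hc⟩ => ?_⟩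
  simp only [hc]
  exact tendsto_const_nhds.div_atTop
    (tendsto_atTop_add_const_left _ 1 tendsto_norm_cobounded_atTop)

theorem exists_affine_iff_deriv_eq_const {g : ℂ → ℂ} (hg : Differentiable ℂ g) :
    (∃ a b : ℂ, ∀ z, g z = a * z + b) ↔ ∃ c, ∀ z, deriv g z = c := by
  refine ⟨fun ⟨a, b, hab⟩ => ⟨a, fun z => by simp [funext hab]⟩,
    fun ⟨c, hc⟩ => ⟨c, g 0, fun z => ?_⟩⟩
  have hconst := is_const_of_deriv_eq_zero (f := fun z => g z - c * z) (by fun_prop)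
    (fun w => by
      simpa [hc] using ((hg w).hasDerivAt.fun_sub ((hasDerivAt_id' w).const_mul c)).deriv) z 0
  simp only [mul_zero, sub_zero] at hconst
  rw [← hconst]
  ring

theorem norm_le_of_fockNormInf_le {α : ℝ} {F : ℂ → ℂ} {B : ℝ≥0∞} (hB : B ≠ ⊤)
    (h : fockNormInf α F ≤ B) (z : ℂ) :
    ‖F z‖ ≤ B.toReal * Real.exp (α / 2 * ‖z‖ ^ 2) := by
  have hz := (ENNReal.ofReal_le_iff_le_toReal hB).1 ((le_iSup _ z).trans h)
  rwa [neg_mul, Real.exp_neg, ← div_eq_mul_inv, div_le_iff₀ (Real.exp_pos _)] at hz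

section Volterra

theorem mul_intervalIntegral_comp_mul_eq_sub {φ P : ℂ → ℂ} (hP : ∀ w, HasDerivAt P (φ w) w)
    (hφ : Continuous φ) (z : ℂ) :
    z * ∫ t in (0:ℝ)..1, φ (t * z) = P z - P 0 := by
  have hderiv (t : ℝ) : HasDerivAt (fun s : ℝ => P (s * z)) (z * φ (t * z)) t := by
    have := (hP (t * z)).comp (t : ℂ) ((hasDerivAt_id (t : ℂ)).mul_const z)
    simpa [mul_comm] using this.comp_ofReal
  rw [← intervalIntegral.integral_const_mul,
    intervalIntegral.integral_eq_sub_of_hasDerivAt (fun t _ => hderiv t)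
      ((by fun_prop : Continuous fun t : ℝ => z * φ (t * z)).intervalIntegrable 0 1)]
  simp

variable {g f : ℂ → ℂ}

theorem hasDerivAt_volterra (hg : Differentiable ℂ g) (hf : Differentiable ℂ f) (z : ℂ) :
    HasDerivAt (volterra g f) (f z * deriv g z) z := by
  obtain ⟨P, hP⟩ := (hf.mul hg.deriv).isExactOn_univ
  have hV : volterra g f = fun z => P z - P 0 :=
    funext (mul_intervalIntegral_comp_mul_eq_sub (fun w => hP w trivial)
      (hf.mul hg.deriv).continuous)
  rw [hV]
  exact (hP z trivial).sub_const _

theorem norm_volterra_le {b : ℝ → ℝ} (hb : IntervalIntegrable b volume 0 1) (z : ℂ)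
    (hfg : ∀ t ∈ Set.Ioc (0:ℝ) 1, ‖f (t * z) * deriv g (t * z)‖ ≤ b t) :
    ‖volterra g f z‖ ≤ ‖z‖ * ∫ t in (0:ℝ)..1, b t := by
  rw [volterra, norm_mul]
  gcongr
  exact intervalIntegral.norm_integral_le_of_norm_le zero_le_one (ae_of_all _ hfg) hb

theorem norm_volterra_le_of_forall_mem_closedBall {B : ℝ} {z : ℂ}
    (hfg : ∀ w ∈ closedBall (0:ℂ) ‖z‖, ‖f w * deriv g w‖ ≤ B) :
    ‖volterra g f z‖ ≤ ‖z‖ * B := by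
  have h := norm_volterra_le (b := fun _ => B) intervalIntegrable_const z fun t ht => hfg _ ?_
  · simpa using h
  rw [mem_closedBall_zero_iff, norm_mul, norm_real, Real.norm_of_nonneg ht.1.le]
  exact mul_le_of_le_one_left (norm_nonneg z) ht.2

theorem intervalIntegral_exp_mul_le {s : ℝ} (hs : 0 < s) :
    ∫ t in (0:ℝ)..1, Real.exp (s * t) ≤ Real.exp s / s := by
  rw [intervalIntegral.integral_comp_mul_left _ hs.ne', integral_exp, smul_eq_mul, mul_zero,
    mul_one, Real.exp_zero, inv_mul_eq_div]
  gcongr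
  linarith

theorem norm_volterra_mul_exp_le {α K : ℝ} (hα : 0 < α)
    (hfg : ∀ w, ‖f w * deriv g w‖ ≤ K * Real.exp (α / 2 * ‖w‖ ^ 2)) {z : ℂ} (hz : z ≠ 0) :
    ‖volterra g f z‖ * Real.exp (-(α / 2) * ‖z‖ ^ 2) ≤ 2 * K / (α * ‖z‖) := by
  have hK : 0 ≤ K := nonneg_of_mul_nonneg_left ((norm_nonneg _).trans (hfg 0)) (Real.exp_pos _)
  set s := α / 2 * ‖z‖ ^ 2
  have hs : 0 < s := by positivity
  have hV : ‖volterra g f z‖ ≤ ‖z‖ * (K * (Real.exp s / s)) := by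
    have hb : Continuous fun t : ℝ => K * Real.exp (s * t) := by fun_prop
    refine (norm_volterra_le (hb.intervalIntegrable 0 1) z fun t ht => (hfg _).trans ?_).trans ?_
    · gcongr K * Real.exp ?_
      rw [norm_mul, norm_real, Real.norm_of_nonneg ht.1.le]
      have ht2 : t ^ 2 ≤ t := by nlinarith [ht.1, ht.2]
      calc α / 2 * (t * ‖z‖) ^ 2 = s * t ^ 2 := by ring
        _ ≤ s * t := by gcongr
    · rw [intervalIntegral.integral_const_mul]
      gcongr
      exact intervalIntegral_exp_mul_le hs
  calc ‖volterra g f z‖ * Real.exp (-(α / 2) * ‖z‖ ^ 2)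
      ≤ ‖z‖ * (K * (Real.exp s / s)) * Real.exp (-s) := by
        rw [neg_mul]; gcongr
    _ = 2 * K / (α * ‖z‖) := by
        rw [Real.exp_neg]; field_simp; ring

theorem norm_mul_deriv_le_of_fockNormInf_volterra_le {α : ℝ} (hα : 0 ≤ α)
    (hg : Differentiable ℂ g) (hf : Differentiable ℂ f) {B : ℝ≥0∞} (hB : B ≠ ⊤)
    (hV : fockNormInf α (volterra g f) ≤ B) {r : ℝ} (hr : 0 < r) (z : ℂ) :
    ‖f z * deriv g z‖ ≤ B.toReal * Real.exp (α / 2 * (‖z‖ + r) ^ 2) / r := by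
  rw [← (hasDerivAt_volterra hg hf z).deriv]
  refine norm_deriv_le_of_forall_mem_sphere_norm_le hr
    (Differentiable.diffContOnCl fun w => (hasDerivAt_volterra hg hf w).differentiableAt)
    fun w hw => ?_
  have hw' : ‖w‖ ≤ ‖z‖ + r := by
    rw [← mem_sphere_iff_norm.1 hw]
    exact norm_le_insert' w z
  refine (norm_le_of_fockNormInf_le hB hV w).trans ?_
  gcongr

end Volterra

theorem rpow_mul_exp_eq {a : ℝ} (ha : 0 ≤ a) (α p x : ℝ) :
    a ^ p * Real.exp (-(α * p / 2) * x) = (a * Real.exp (-(α / 2) * x)) ^ p := by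
  rw [Real.mul_rpow ha (Real.exp_pos _).le, ← Real.exp_mul]
  ring_nf

noncomputable def weyl (α : ℝ) (w : ℂ) (f : ℂ → ℂ) (u : ℂ) : ℂ :=
  f (u + w) * cexp (-α * (conj w * u) - α * ‖w‖ ^ 2 / 2)

section Weyl

variable {α : ℝ}

theorem Differentiable.weyl {f : ℂ → ℂ} (hf : Differentiable ℂ f) (w : ℂ) :
    Differentiable ℂ (weyl α w f) :=
  (hf.comp (differentiable_id.add_const w)).mul (by fun_prop)

theorem norm_weyl_mul_exp (w : ℂ) (f : ℂ → ℂ) (u : ℂ) :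
    ‖weyl α w f u‖ * Real.exp (-(α / 2) * ‖u‖ ^ 2) =
      ‖f (u + w)‖ * Real.exp (-(α / 2) * ‖u + w‖ ^ 2) := by
  rw [weyl, norm_mul, norm_exp, mul_assoc, ← Real.exp_add]
  congr 2
  simp only [sub_re, mul_re, neg_re, ofReal_re, neg_im, ofReal_im, conj_re, conj_im, mul_im,
    div_ofNat_re, ← Complex.ofReal_pow, Complex.sq_norm, normSq_apply, add_re, add_im]
  ring

theorem fockNormInf_weyl (w : ℂ) (f : ℂ → ℂ) :
    fockNormInf α (weyl α w f) = fockNormInf α f := by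
  simp only [fockNormInf, norm_weyl_mul_exp]
  exact (Equiv.addRight w).iSup_comp
    (g := fun u => ENNReal.ofReal (‖f u‖ * Real.exp (-(α / 2) * ‖u‖ ^ 2)))

theorem fockNormP_weyl (p : ℝ) (w : ℂ) (f : ℂ → ℂ) :
    fockNormP α p (weyl α w f) = fockNormP α p f := by
  simp only [fockNormP, rpow_mul_exp_eq (norm_nonneg _), norm_weyl_mul_exp]
  rw [lintegral_add_right_eq_self
    (fun u => ENNReal.ofReal ((‖f u‖ * Real.exp (-(α / 2) * ‖u‖ ^ 2)) ^ p))]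

theorem norm_weyl_one (w u : ℂ) :
    ‖weyl α w 1 u‖ = Real.exp (α / 2 * (‖u‖ ^ 2 - ‖u + w‖ ^ 2)) := by
  rw [weyl, Pi.one_apply, one_mul, norm_exp]
  congr 1
  simp only [sub_re, mul_re, neg_re, ofReal_re, neg_im, ofReal_im, conj_re, conj_im, mul_im,
    div_ofNat_re, ← Complex.ofReal_pow, Complex.sq_norm, normSq_apply, add_re, add_im]
  ring

theorem norm_weyl_one_neg_self (c : ℂ) :
    ‖weyl α (-c) 1 c‖ = Real.exp (α / 2 * ‖c‖ ^ 2) := by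
  simp [norm_weyl_one]

theorem tendstoUniformlyOn_weyl_one (hα : 0 < α) {K : Set ℂ} (hK : IsBounded K) :
    TendstoUniformlyOn (fun c => weyl α (-c) 1) 0 (cobounded ℂ) K := by
  obtain ⟨R, hR⟩ := hK.subset_closedBall 0
  have hlim : Tendsto (fun c : ℂ => Real.exp (α / 2 * (R ^ 2 - (‖c‖ - R) ^ 2))) (cobounded ℂ)
      (𝓝 0) := by
    refine Real.tendsto_exp_atBot.comp (Tendsto.const_mul_atBot (by positivity) ?_)
    refine tendsto_atBot_add_const_left _ _ (tendsto_neg_atTop_atBot.comp ?_)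
    exact (tendsto_pow_atTop two_ne_zero).comp
      (tendsto_atTop_add_const_right _ _ tendsto_norm_cobounded_atTop)
  rw [Metric.tendstoUniformlyOn_iff]
  intro ε hε
  filter_upwards [hlim.eventually (gt_mem_nhds hε),
    tendsto_norm_cobounded_atTop.eventually_ge_atTop R] with c hc hcR u hu
  have huR : ‖u‖ ≤ R := mem_closedBall_zero_iff.1 (hR hu)
  have hdist : ‖c‖ - R ≤ ‖u + -c‖ := by
    rw [← sub_eq_add_neg, norm_sub_rev]
    linarith [norm_sub_norm_le c u]
  rw [Pi.zero_apply, dist_zero_left, norm_weyl_one]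
  refine lt_of_le_of_lt (Real.exp_le_exp.2 ?_) hc
  gcongr

theorem fockNormInf_one_le (hα : 0 ≤ α) : fockNormInf α 1 ≤ 1 := by
  refine iSup_le fun z => ENNReal.ofReal_le_one.2 ?_
  rw [Pi.one_apply, norm_one, one_mul, Real.exp_le_one_iff]
  have := sq_nonneg ‖z‖
  nlinarith

theorem fockNormP_one_lt_top (hα : 0 < α) {p : ℝ} (hp : 0 < p) : fockNormP α p 1 < ⊤ := by
  have hb : 0 < α * p / 2 := by positivity
  have hgauss : Integrable fun z : ℂ => Real.exp (-(α * p / 2) * ‖z‖ ^ 2) := by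
    have h := GaussianFourier.integrable_cexp_neg_mul_sq_norm_add (V := ℂ)
      (b := ((α * p / 2 : ℝ) : ℂ)) (by simpa using hb) 0 0
    simp only [zero_mul, add_zero] at h
    refine h.norm.congr (Eventually.of_forall fun z => ?_)
    simp [norm_exp, ← Complex.ofReal_pow]
  simp only [fockNormP, Pi.one_apply, norm_one, Real.one_rpow, one_mul]
  exact ENNReal.rpow_lt_top_of_nonneg (by positivity)
    (ENNReal.mul_lt_top ENNReal.ofReal_lt_top hgauss.lintegral_lt_top).ne

end Weyl

section Compactness

variable {α : ℝ} {g : ℂ → ℂ}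

theorem tendsto_fockNormInf_volterra (hα : 0 < α) {A K : ℝ} (hA : ∀ w, ‖deriv g w‖ ≤ A)
    {f : ℕ → ℂ → ℂ} (hK : ∀ j w, ‖f j w * deriv g w‖ ≤ K * Real.exp (α / 2 * ‖w‖ ^ 2))
    (hf : ∀ S : Set ℂ, IsCompact S → TendstoUniformlyOn f 0 atTop S) :
    Tendsto (fun j => fockNormInf α (volterra g (f j))) atTop (𝓝 0) := by
  have hA0 : 0 ≤ A := (norm_nonneg _).trans (hA 0)
  rw [ENNReal.tendsto_nhds_zero]
  intro ε hε
  obtain ⟨η, -, hη, hηε⟩ := ENNReal.lt_iff_exists_real_btwn.1 hε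
  rw [ENNReal.ofReal_pos] at hη
  set R := max (2 * K / (α * η)) 1
  have hR : 0 < R := lt_of_lt_of_le one_pos (le_max_right _ _)
  set δ := η / (R * A + 1) with hδ
  filter_upwards [Metric.tendstoUniformlyOn_iff.1 (hf _ (isCompact_closedBall 0 R)) δ
    (by positivity)] with j hj
  refine (iSup_le fun z => ENNReal.ofReal_le_ofReal ?_).trans hηε.le
  rcases le_or_gt ‖z‖ R with hzR | hzR
  · have hball : ∀ w ∈ closedBall (0:ℂ) ‖z‖, ‖f j w * deriv g w‖ ≤ δ * A := fun w hw => by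
      rw [norm_mul]
      have := hj w (closedBall_subset_closedBall hzR hw)
      rw [Pi.zero_apply, dist_zero_left] at this
      gcongr
      exact hA w
    calc ‖volterra g (f j) z‖ * Real.exp (-(α / 2) * ‖z‖ ^ 2)
        ≤ ‖volterra g (f j) z‖ := mul_le_of_le_one_right (norm_nonneg _)
          (Real.exp_le_one_iff.2 (by nlinarith [sq_nonneg ‖z‖]))
      _ ≤ ‖z‖ * (δ * A) := norm_volterra_le_of_forall_mem_closedBall hball
      _ ≤ R * (δ * A) := by gcongr
      _ = η * (R * A / (R * A + 1)) := by rw [hδ]; ring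
      _ ≤ η := mul_le_of_le_one_right hη.le ((div_le_one (by positivity)).2 (by linarith))
  · have hz : 0 < ‖z‖ := hR.trans hzR
    refine (norm_volterra_mul_exp_le hα (hK j) (norm_pos_iff.1 hz)).trans ?_
    rw [div_le_iff₀ (by positivity)]
    have := (le_max_left _ _).trans hzR.le
    rw [div_le_iff₀ (by positivity)] at this
    nlinarith

theorem norm_mul_deriv_le_of_volterra_bounded (hα : 0 ≤ α) (hg : Differentiable ℂ g) {a : ℂ}
    (hga : ∀ z, deriv g z = a) {N : (ℂ → ℂ) → ℝ≥0∞} (hN : ∀ w f, N (weyl α w f) = N f)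
    {C : ℝ≥0∞} (hV : ∀ f, Differentiable ℂ f → fockNormInf α (volterra g f) ≤ C * N f)
    {f : ℂ → ℂ} (hf : Differentiable ℂ f) (hCf : C * N f ≠ ⊤) (w : ℂ) :
    ‖f w * deriv g w‖ ≤
      (C * N f).toReal * Real.exp (α / 2) * Real.exp (α / 2 * ‖w‖ ^ 2) := by
  have hW : ‖weyl α w f 0‖ = ‖f w‖ * (Real.exp (α / 2 * ‖w‖ ^ 2))⁻¹ := by
    simpa [neg_mul, Real.exp_neg] using norm_weyl_mul_exp (α := α) w f 0
  have h0 : ‖weyl α w f 0 * deriv g 0‖ ≤ (C * N f).toReal * Real.exp (α / 2) := by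
    simpa using norm_mul_deriv_le_of_fockNormInf_volterra_le hα hg (hf.weyl w) hCf
      ((hV _ (hf.weyl w)).trans_eq (by rw [hN])) one_pos 0
  rw [norm_mul, hW, hga] at h0
  rw [norm_mul, hga]
  calc ‖f w‖ * ‖a‖
      = ‖f w‖ * (Real.exp (α / 2 * ‖w‖ ^ 2))⁻¹ * ‖a‖ * Real.exp (α / 2 * ‖w‖ ^ 2) := by
        field_simp
    _ ≤ _ := by gcongr

theorem norm_deriv_div_le_fockNormInf_volterra_weyl (hα : 0 ≤ α) (hg : Differentiable ℂ g)
    (z : ℂ) (hfin : fockNormInf α (volterra g (weyl α (-z) 1)) ≠ ⊤) :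
    ‖deriv g z‖ / (1 + ‖z‖) ≤
      Real.exp (3 * α / 2) * (fockNormInf α (volterra g (weyl α (-z) 1))).toReal := by
  set B := (fockNormInf α (volterra g (weyl α (-z) 1))).toReal
  -- On the circle of radius `r` about `z` the weight `e^{α|w|²/2}` exceeds `e^{α|z|²/2}` by at
  -- most the factor `e^{3α/2}`.
  set r := (1 + ‖z‖)⁻¹
  have hr : 0 < r := by positivity
  have hr1 : r ≤ 1 := inv_le_one_of_one_le₀ (by linarith [norm_nonneg z])
  have hrz : r * ‖z‖ ≤ 1 := by
    rw [inv_mul_le_iff₀ (by positivity)]; linarith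
  have hexp : Real.exp (α / 2 * (‖z‖ + r) ^ 2) ≤
      Real.exp (α / 2 * ‖z‖ ^ 2) * Real.exp (3 * α / 2) := by
    rw [← Real.exp_add, Real.exp_le_exp]
    have hsq : (‖z‖ + r) ^ 2 ≤ ‖z‖ ^ 2 + 3 := by nlinarith
    calc α / 2 * (‖z‖ + r) ^ 2 ≤ α / 2 * (‖z‖ ^ 2 + 3) := by gcongr
      _ = α / 2 * ‖z‖ ^ 2 + 3 * α / 2 := by ring
  have h := norm_mul_deriv_le_of_fockNormInf_volterra_le hα hg
    (differentiable_one.weyl (-z)) hfin le_rfl hr z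
  rw [norm_mul, norm_weyl_one_neg_self, div_inv_eq_mul] at h
  rw [div_le_iff₀ (by positivity)]
  have hB : 0 ≤ B := ENNReal.toReal_nonneg
  refine le_of_mul_le_mul_left ?_ (Real.exp_pos (α / 2 * ‖z‖ ^ 2))
  calc Real.exp (α / 2 * ‖z‖ ^ 2) * ‖deriv g z‖
      ≤ B * Real.exp (α / 2 * (‖z‖ + r) ^ 2) * (1 + ‖z‖) := h
    _ ≤ B * (Real.exp (α / 2 * ‖z‖ ^ 2) * Real.exp (3 * α / 2)) * (1 + ‖z‖) := by
        gcongr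
    _ = _ := by ring

theorem tendsto_norm_deriv_div_of_volterraCompact (hα : 0 < α) (hg : Differentiable ℂ g)
    {N : (ℂ → ℂ) → ℝ≥0∞} (hN : ∀ w f, N (weyl α w f) = N f) (h1 : N 1 < ⊤)
    (hcomp : volterraCompact α g N) :
    Tendsto (fun z => ‖deriv g z‖ / (1 + ‖z‖)) (cobounded ℂ) (𝓝 0) := by
  have hker : Tendsto (fun c => fockNormInf α (volterra g (weyl α (-c) 1))) (cobounded ℂ)
      (𝓝 0) := by
    rw [← comap_norm_atTop, tendsto_iff_seq_tendsto]
    intro c hc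
    rw [comap_norm_atTop] at hc
    exact hcomp _ (fun j => differentiable_one.weyl _) ⟨N 1, h1, fun j => (hN _ _).le⟩
      fun K hK u hu => hc.eventually (tendstoUniformlyOn_weyl_one hα hK.isBounded u hu)
  refine squeeze_zero' (Eventually.of_forall fun z => by positivity)
    ((hker.eventually (eventually_ne_nhds zero_ne_top)).mono fun z hz =>
      norm_deriv_div_le_fockNormInf_volterra_weyl hα.le hg z hz) ?_
  simpa using
    ((ENNReal.tendsto_toReal zero_ne_top).comp hker).const_mul (Real.exp (3 * α / 2))

theorem volterraCompact_iff_exists_affine (hα : 0 < α) (hg : Differentiable ℂ g)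
    {N : (ℂ → ℂ) → ℝ≥0∞} (hN : ∀ w f, N (weyl α w f) = N f) (h1 : N 1 < ⊤) {C : ℝ≥0∞}
    (hC : C < ⊤) (hV : ∀ f, Differentiable ℂ f → fockNormInf α (volterra g f) ≤ C * N f) :
    volterraCompact α g N ↔ ∃ a b : ℂ, ∀ z, g z = a * z + b := by
  rw [exists_affine_iff_deriv_eq_const hg]
  refine ⟨fun hcomp => (tendsto_norm_div_one_add_norm_iff_eq_const hg.deriv).1
    (tendsto_norm_deriv_div_of_volterraCompact hα hg hN h1 hcomp), fun ⟨a, ha⟩ => ?_⟩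
  rintro f hf ⟨M, hM, hfM⟩ hloc
  refine tendsto_fockNormInf_volterra hα (K := (C * M).toReal * Real.exp (α / 2))
    (fun w => (congrArg norm (ha w)).le) (fun j w => ?_) hloc
  refine (norm_mul_deriv_le_of_volterra_bounded hα.le hg ha hN hV (hf j)
    (mul_lt_top hC ((hfM j).trans_lt hM)).ne w).trans ?_
  gcongr ?_ * _ * _
  exact ENNReal.toReal_mono (mul_lt_top hC hM).ne (mul_le_mul_right (hfM j) C)

end Compactness

theorem volterra_compact_iff_affine (α : ℝ) (hα : 0 < α)
    (g : ℂ → ℂ) (hg : Differentiable ℂ g) :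
    (∀ p : ℝ, 0 < p →
      (∃ C : ℝ≥0∞, C < ⊤ ∧ ∀ f : ℂ → ℂ, Differentiable ℂ f →
          fockNormInf α (volterra g f) ≤ C * fockNormP α p f) →
      (volterraCompact α g (fockNormP α p) ↔ ∃ a b : ℂ, ∀ z : ℂ, g z = a * z + b)) ∧
    ((∃ C : ℝ≥0∞, C < ⊤ ∧ ∀ f : ℂ → ℂ, Differentiable ℂ f →
          fockNormInf α (volterra g f) ≤ C * fockNormInf α f) →
      (volterraCompact α g (fockNormInf α) ↔ ∃ a b : ℂ, ∀ z : ℂ, g z = a * z + b)) ∧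
    (Filter.Tendsto (fun z : ℂ => ‖deriv g z‖ / (1 + ‖z‖))
        (cobounded ℂ) (nhds 0)
      ↔ ∃ c : ℂ, ∀ z : ℂ, deriv g z = c) := by
  refine ⟨fun p hp ⟨C, hC, hV⟩ => volterraCompact_iff_exists_affine hα hg (fockNormP_weyl p)
      (fockNormP_one_lt_top hα hp) hC hV,
    fun ⟨C, hC, hV⟩ => volterraCompact_iff_exists_affine hα hg fockNormInf_weyl
      ((fockNormInf_one_le hα.le).trans_lt one_lt_top) hC hV,
    tendsto_norm_div_one_add_norm_iff_eq_const hg.deriv⟩
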